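/- arXiv:2107.09004 — 5 statements merged into one kernel-verified Lean document; each statement's English description precedes it below -/
import Mathlib

section
/- Let X be a topological space, R a commutative Banach ring, K₀, K₁ ⊆ X subsets, and for a subset S ⊆ X let I_S = {f : X → R continuous with finite image | f|_S = 0}. Then I_{K₀} · I_{K₁} = I_{K₀ ∪ K₁} = I_{K₀} ∩ I_{K₁}, where I_{K₀} · I_{K₁} denotes the ideal product. -/
variable (X R : Type*) [TopologicalSpace X] [NormedCommRing R] [CompleteSpace R]

/-- The ring of continuous functions `X → R` with finite image. -/
def Cfin : Subring (X → R) where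
  carrier := {f | Continuous f ∧ (Set.range f).Finite}
  mul_mem' {a b} ha hb := ⟨ha.1.mul hb.1,
    (Set.Finite.image2 (· * ·) ha.2 hb.2).subset (by
      rintro _ ⟨x, rfl⟩
      exact Set.mem_image2_of_mem (Set.mem_range_self x) (Set.mem_range_self x))⟩
  one_mem' := ⟨continuous_const, Set.finite_range_const⟩
  add_mem' {a b} ha hb := ⟨ha.1.add hb.1,
    (Set.Finite.image2 (· + ·) ha.2 hb.2).subset (by
      rintro _ ⟨x, rfl⟩
      exact Set.mem_image2_of_mem (Set.mem_range_self x) (Set.mem_range_self x))⟩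
  zero_mem' := ⟨continuous_const, Set.finite_range_const⟩
  neg_mem' {a} ha := ⟨ha.1.neg, (ha.2.image Neg.neg).subset (by
      rintro _ ⟨x, rfl⟩
      exact ⟨a x, Set.mem_range_self x, rfl⟩)⟩

/-- The ideal of finite-image continuous functions vanishing on `S ⊆ X`. -/
def vanIdeal (S : Set X) : Ideal (Cfin X R) where
  carrier := {f | ∀ x ∈ S, f.1 x = 0}
  add_mem' {a b} ha hb x hx := by
    show a.1 x + b.1 x = 0
    rw [ha x hx, hb x hx, add_zero]
  zero_mem' x _ := rfl
  smul_mem' c f hf x hx := by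
    show c.1 x * f.1 x = 0
    rw [hf x hx, mul_zero]

open Set

theorem IsLocallyConstant.of_continuous_of_finite_range {X Y : Type*} [TopologicalSpace X]
    [TopologicalSpace Y] [T1Space Y] {f : X → Y} (hf : Continuous f) (hfin : (range f).Finite) :
    IsLocallyConstant f :=
  have : Finite (range f) := hfin
  ((IsLocallyConstant.iff_continuous _).mpr hf.rangeFactorization).comp Subtype.val

section

variable {X R : Type*} [TopologicalSpace X] [NormedCommRing R]

theorem comp_mem_Cfin {f : X → R} (hf : f ∈ Cfin X R) (g : R → R) : g ∘ f ∈ Cfin X R :=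
  ⟨((IsLocallyConstant.of_continuous_of_finite_range hf.1 hf.2).comp g).continuous,
    (hf.2.image g).subset (range_comp g f).le⟩

theorem mem_vanIdeal {S : Set X} {f : Cfin X R} : f ∈ vanIdeal X R S ↔ ∀ x ∈ S, f.1 x = 0 :=
  Iff.rfl

theorem vanIdeal_union (S T : Set X) :
    vanIdeal X R (S ∪ T) = vanIdeal X R S ⊓ vanIdeal X R T := by
  ext f
  simp only [mem_vanIdeal, Ideal.mem_inf, mem_union, or_imp, forall_and]

/-- `f = 1_U · f` with `U = {f ≠ 0}` clopen, and `1_U` vanishes on `S` because `f` does. -/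
theorem vanIdeal_union_le_mul (S T : Set X) :
    vanIdeal X R (S ∪ T) ≤ vanIdeal X R S * vanIdeal X R T := by
  classical
  intro f hf
  let e : Cfin X R := ⟨_, comp_mem_Cfin f.2 fun r => if r = 0 then 0 else 1⟩
  have he : e ∈ vanIdeal X R S := fun x hx => by
    simp [e, hf x (Or.inl hx)]
  have hfT : f ∈ vanIdeal X R T := fun x hx => hf x (Or.inr hx)
  have hef : e * f = f := by
    ext x
    by_cases h : f.1 x = 0 <;> simp [e, h]
  exact hef ▸ Ideal.mul_mem_mul he hfT

end

set_option synthInstance.maxHeartbeats 1000000 in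
/-- `I_{K₀} · I_{K₁} = I_{K₀ ∪ K₁} = I_{K₀} ∩ I_{K₁}` for the vanishing ideals of the ring
of finite-image continuous functions `X → R`. -/
theorem stmt7 (K₀ K₁ : Set X) :
    vanIdeal X R K₀ * vanIdeal X R K₁ = vanIdeal X R (K₀ ∪ K₁) ∧
    vanIdeal X R (K₀ ∪ K₁) = vanIdeal X R K₀ ⊓ vanIdeal X R K₁ := by
  refine ⟨le_antisymm ?_ (vanIdeal_union_le_mul K₀ K₁), vanIdeal_union K₀ K₁⟩
  rw [vanIdeal_union]
  exact Ideal.mul_le_inf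
end

section
/- Let X be a totally disconnected compact Hausdorff space, R a commutative Banach ring isolated at 0, and K₀, K₁ ⊆ X closed subsets. Then for every continuous f : X → R vanishing on K₀ ∩ K₁, there exist continuous f₀, f₁ : X → R with f₀ vanishing on K₀, f₁ vanishing on K₁, f = f₀ + f₁, and ‖f₀‖_∞ + ‖f₁‖_∞ ≤ 2‖f‖_∞. -/
open Set

lemma aux_clopen {X : Type*} [TopologicalSpace X] [CompactSpace X] [T2Space X]
    [TotallyDisconnectedSpace X] {K U : Set X} (hK : IsCompact K) (hU : IsOpen U)
    (hKU : K ⊆ U) : ∃ V : Set X, IsClopen V ∧ K ⊆ V ∧ V ⊆ U := by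
  choose V hV hxV hVU using fun x (hx : x ∈ K) => compact_exists_isClopen_in_isOpen hU (hKU hx)
  obtain ⟨t, ht⟩ := hK.elim_finite_subcover (fun x : K => V x x.2)
    (fun x => (hV x x.2).2) (fun x hx => mem_iUnion.2 ⟨⟨x, hx⟩, hxV x hx⟩)
  refine ⟨⋃ x ∈ t, V x x.2, ?_, ?_, ?_⟩
  · exact isClopen_biUnion_finset fun x _ => hV x x.2
  · intro x hx
    simpa using ht hx
  · simp only [iUnion_subset_iff]
    exact fun x _ => hVU x x.2

/-- Splitting of a function vanishing on `K₀ ∩ K₁` as a sum `f₀ + f₁` with `f_i` vanishing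
on `K_i` and `‖f₀‖ + ‖f₁‖ ≤ 2‖f‖`, over a Banach ring `R` isolated at `0`, on a totally
disconnected compact Hausdorff space `X`. -/
theorem stmt8 (X R : Type*) [TopologicalSpace X] [CompactSpace X] [T2Space X]
    [TotallyDisconnectedSpace X] [NormedCommRing R] [CompleteSpace R]
    (hiso : ∃ ε > (0 : ℝ), ∀ r : R, ‖r‖ < ε → r = 0)
    (K₀ K₁ : Set X) (hK₀ : IsClosed K₀) (hK₁ : IsClosed K₁)
    (f : BoundedContinuousFunction X R) (hf : ∀ x ∈ K₀ ∩ K₁, f x = 0) :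
    ∃ f₀ f₁ : BoundedContinuousFunction X R,
      (∀ x ∈ K₀, f₀ x = 0) ∧ (∀ x ∈ K₁, f₁ x = 0) ∧ f = f₀ + f₁ ∧
      ‖f₀‖ + ‖f₁‖ ≤ 2 * ‖f‖ := by
  obtain ⟨ε, hε, hiso⟩ := hiso
  have hopen : IsOpen (f ⁻¹' {0}) := by
    have : f ⁻¹' {0} = f ⁻¹' (Metric.ball 0 ε) := by
      ext x
      simp only [mem_preimage, mem_singleton_iff, Metric.mem_ball, dist_zero_right]
      exact ⟨fun h => by simpa [h] using hε, fun h => hiso _ h⟩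
    rw [this]
    exact (Metric.isOpen_ball).preimage f.continuous
  have hcompact : IsCompact (K₁ \ f ⁻¹' {0}) := (hK₁.sdiff hopen).isCompact
  have hsub : K₁ \ f ⁻¹' {0} ⊆ K₀ᶜ := by
    rintro x ⟨hx1, hx0⟩ hx
    exact hx0 (hf x ⟨hx, hx1⟩)
  obtain ⟨V, hV, hKV, hVU⟩ := aux_clopen hcompact hK₀.isOpen_compl hsub
  have hcont : ∀ W : Set X, IsClopen W → Continuous (W.indicator f) := fun W hW =>
    continuous_indicator (by simp [hW]) f.continuous.continuousOn
  have hnorm : ∀ (W : Set X) (x : X), ‖W.indicator (⇑f) x‖ ≤ ‖f x‖ := fun W x =>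
    norm_indicator_le_norm_self _ _
  let f₀ : BoundedContinuousFunction X R :=
    ⟨⟨V.indicator f, hcont V hV⟩, 2 * ‖f‖, fun x y => by
      calc dist _ _ ≤ ‖V.indicator (⇑f) x‖ + ‖V.indicator (⇑f) y‖ := dist_le_norm_add_norm _ _
        _ ≤ 2 * ‖f‖ := by
            have h1 := (hnorm V x).trans (f.norm_coe_le_norm x)
            have h2 := (hnorm V y).trans (f.norm_coe_le_norm y)
            linarith⟩
  let f₁ : BoundedContinuousFunction X R :=
    ⟨⟨Vᶜ.indicator f, hcont Vᶜ hV.compl⟩, 2 * ‖f‖, fun x y => by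
      calc dist _ _ ≤ ‖Vᶜ.indicator (⇑f) x‖ + ‖Vᶜ.indicator (⇑f) y‖ := dist_le_norm_add_norm _ _
        _ ≤ 2 * ‖f‖ := by
            have h1 := (hnorm Vᶜ x).trans (f.norm_coe_le_norm x)
            have h2 := (hnorm Vᶜ y).trans (f.norm_coe_le_norm y)
            linarith⟩
  have hf₀ : ∀ x, f₀ x = V.indicator f x := fun x => rfl
  have hf₁ : ∀ x, f₁ x = Vᶜ.indicator f x := fun x => rfl
  have h0 : ∀ x ∈ K₀, f₀ x = 0 := by
    intro x hx
    have hxV : x ∉ V := fun hxV => hVU hxV hx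
    rw [hf₀, Set.indicator_of_notMem hxV]
  have h1 : ∀ x ∈ K₁, f₁ x = 0 := by
    intro x hx
    by_cases hxV : x ∈ V
    · rw [hf₁, Set.indicator_of_notMem (by simpa using hxV)]
    · have hfx : f x = 0 := by
        by_contra h
        exact hxV (hKV ⟨hx, h⟩)
      by_cases hxc : x ∈ Vᶜ
      · rw [hf₁, Set.indicator_of_mem hxc, hfx]
      · rw [hf₁, Set.indicator_of_notMem hxc]
  refine ⟨f₀, f₁, h0, h1, ?_, ?_⟩
  · ext x
    rw [BoundedContinuousFunction.add_apply, hf₀, hf₁]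
    by_cases hxV : x ∈ V
    · rw [Set.indicator_of_mem hxV, Set.indicator_of_notMem (by simpa using hxV), add_zero]
    · rw [Set.indicator_of_notMem hxV, Set.indicator_of_mem (by simpa using hxV), zero_add]
  · have hb0 : ‖f₀‖ ≤ ‖f‖ := by
      rw [BoundedContinuousFunction.norm_le (norm_nonneg f)]
      intro x
      rw [hf₀]
      exact (hnorm V x).trans (f.norm_coe_le_norm x)
    have hb1 : ‖f₁‖ ≤ ‖f‖ := by
      rw [BoundedContinuousFunction.norm_le (norm_nonneg f)]
      intro x
      rw [hf₁]
      exact (hnorm Vᶜ x).trans (f.norm_coe_le_norm x)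
    linarith
end

section
/- Let X be a totally disconnected compact Hausdorff space, R a commutative Banach ring isolated at 0, and K ⊆ X a closed subset. Then every continuous function f : K → R extends to a continuous function f̃ : X → R with ‖f̃‖_∞ = ‖f‖_∞ (a Tietze-type extension with equal sup norm). -/
/-!
Since `R` is isolated at `0` it is discrete, so `f`, being continuous on the compact set `K`,
takes finitely many values and its fibres are pairwise disjoint closed subsets of `X`.
In a profinite space such a finite family is separated by a clopen partition of `X`;
sending each piece to the value of `f` on the fibre it contains gives a continuous extension
whose range is exactly the range of `f`, hence with the same sup norm.
-/

open Set

lemma discreteTopology_of_forall_norm_lt_eq_zero {E : Type*} [SeminormedAddCommGroup E]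
    {ε : ℝ} (hε : 0 < ε) (h : ∀ r : E, ‖r‖ < ε → r = 0) : DiscreteTopology E := by
  refine discreteTopology_of_isOpen_singleton_zero ?_
  convert Metric.isOpen_ball (x := (0 : E)) (ε := ε)
  ext r
  simp only [mem_singleton_iff, Metric.mem_ball, dist_zero_right]
  exact ⟨fun hr => hr ▸ by simpa using hε, h r⟩

section Profinite

variable {X : Type*} [TopologicalSpace X] [CompactSpace X] [T2Space X]
  [TotallyDisconnectedSpace X]

lemma exists_isLocallyConstant_of_pairwiseDisjoint {ι : Type*} [Finite ι] [Nonempty ι]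
    {Z : ι → Set X} (hZ : ∀ i, IsClosed (Z i)) (hdisj : univ.PairwiseDisjoint Z) :
    ∃ c : X → ι, IsLocallyConstant c ∧ ∀ i, ∀ x ∈ Z i, c x = i := by
  obtain ⟨C, hC, hZC, -, hcover, hCdisj⟩ :=
    exists_clopen_partition_of_clopen_cover hZ (fun _ => isClopen_univ) (fun _ => subset_univ _)
      hdisj
  have hmem : ∀ x, ∃ i, x ∈ C i := fun x =>
    mem_iUnion.mp (hcover (mem_iUnion.mpr ⟨Classical.arbitrary ι, mem_univ x⟩))
  choose c hc using hmem
  have hc_eq : ∀ i, ∀ x ∈ C i, c x = i := fun i x hx =>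
    hCdisj.elim (mem_univ _) (mem_univ _) (not_disjoint_iff.mpr ⟨x, hc x, hx⟩)
  refine ⟨c, (IsLocallyConstant.iff_exists_open c).mpr fun x => ?_,
    fun i x hx => hc_eq i x (hZC i hx)⟩
  exact ⟨C (c x), (hC _).isOpen, hc x, fun y hy => hc_eq _ y hy⟩

lemma IsClosed.exists_continuous_extension_range_eq {Y : Type*} [TopologicalSpace Y]
    [DiscreteTopology Y] {K : Set X} (hK : IsClosed K) [Nonempty K] {f : K → Y}
    (hf : Continuous f) :
    ∃ g : X → Y, Continuous g ∧ (∀ x : K, g x = f x) ∧ range g = range f := by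
  have : CompactSpace K := isCompact_iff_compactSpace.mp hK.isCompact
  have : Finite (range f) := (isCompact_range hf).finite_of_discrete
  let Z : range f → Set X := fun y => (↑) '' (f ⁻¹' {y.1})
  have hZ : ∀ y, IsClosed (Z y) := fun y =>
    hK.isClosedEmbedding_subtypeVal.isClosedMap _ (isClosed_singleton.preimage hf)
  have hdisj : univ.PairwiseDisjoint Z := by
    rintro y - y' - hyy'
    refine disjoint_left.mpr ?_
    rintro _ ⟨x, hx, rfl⟩ ⟨x', hx', hxx'⟩
    cases Subtype.ext hxx'
    exact hyy' (Subtype.ext (hx.symm.trans hx'))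
  obtain ⟨c, hc, hcZ⟩ := exists_isLocallyConstant_of_pairwiseDisjoint hZ hdisj
  have hext : ∀ x : K, (c x).1 = f x := fun x =>
    congrArg Subtype.val (hcZ ⟨f x, mem_range_self x⟩ x ⟨x, rfl, rfl⟩)
  refine ⟨fun x => (c x).1, (hc.comp _).continuous, hext, ?_⟩
  refine (range_subset_iff.mpr fun x => (c x).2).antisymm ?_
  rintro _ ⟨x, rfl⟩
  exact ⟨x, hext x⟩

end Profinite

theorem stmt10_general (X R : Type*) [TopologicalSpace X] [CompactSpace X] [T2Space X]
    [TotallyDisconnectedSpace X] [NormedCommRing R]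
    (hiso : ∃ ε > (0 : ℝ), ∀ r : R, ‖r‖ < ε → r = 0)
    (K : Set X) (hK : IsClosed K) (f : K → R) (hf : Continuous f) :
    ∃ g : X → R, Continuous g ∧ (∀ x : K, g x.1 = f x) ∧
      (⨆ x : X, ‖g x‖) = ⨆ x : K, ‖f x‖ := by
  obtain ⟨ε, hε, hsmall⟩ := hiso
  have : DiscreteTopology R := discreteTopology_of_forall_norm_lt_eq_zero hε hsmall
  cases isEmpty_or_nonempty K with
  | inl hK_empty => exact ⟨0, continuous_const, isEmptyElim, by simp⟩
  | inr hK_nonempty =>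
    obtain ⟨g, hg, hgf, hrange⟩ := hK.exists_continuous_extension_range_eq hf
    refine ⟨g, hg, hgf, ?_⟩
    show sSup (range (norm ∘ g)) = sSup (range (norm ∘ f))
    rw [range_comp, range_comp, hrange]

/-- Tietze-type extension with equal sup norm: for `X` totally disconnected compact
Hausdorff and `R` a Banach ring isolated at `0`, any continuous `f : K → R` on a closed
subset `K ⊆ X` extends to a continuous `g : X → R` with the same sup norm. -/
theorem stmt10 (X R : Type*) [TopologicalSpace X] [CompactSpace X] [T2Space X]
    [TotallyDisconnectedSpace X] [NormedCommRing R] [CompleteSpace R]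
    (hiso : ∃ ε > (0 : ℝ), ∀ r : R, ‖r‖ < ε → r = 0)
    (K : Set X) (hK : IsClosed K) (f : K → R) (hf : Continuous f) :
    ∃ g : X → R, Continuous g ∧ (∀ x : K, g x.1 = f x) ∧
      (⨆ x : X, ‖g x‖) = ⨆ x : K, ‖f x‖ :=
  stmt10_general X R hiso K hK f hf
end

section
/- Let R be a commutative Banach ring isolated at 0, M a Banach R-module isolated at 0, and I ⊆ R any ideal. Then R/I equipped with the quotient seminorm is a Banach R-module isolated at 0, and the natural map (R/I) ⊗̂_R M → M/IM is an isomorphism of Banach R-modules. -/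
open scoped TensorProduct

variable (R M : Type*) [NormedCommRing R] [CompleteSpace R]
  [NormedAddCommGroup M] [Module R M] [IsBoundedSMul R M] [CompleteSpace M]
  (I : Ideal R)

/-- The quotient seminorm on `R ⧸ I`. -/
noncomputable def qR (x : R ⧸ I) : ℝ :=
  sInf {c : ℝ | ∃ r : R, Ideal.Quotient.mk I r = x ∧ ‖r‖ = c}

/-- The quotient seminorm on `M ⧸ IM`. -/
noncomputable def qM (y : M ⧸ (I • ⊤ : Submodule R M)) : ℝ :=
  sInf {c : ℝ | ∃ m : M, Submodule.Quotient.mk m = y ∧ ‖m‖ = c}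

/-- The projective tensor seminorm on `(R ⧸ I) ⊗[R] M` (with `R ⧸ I` carrying the
quotient seminorm); for modules isolated at `0` the algebraic tensor product with this
seminorm is the completed projective tensor product `(R ⧸ I) ⊗̂[R] M`. -/
noncomputable def pn16 (t : (R ⧸ I) ⊗[R] M) : ℝ :=
  sInf {c : ℝ | ∃ l : List ((R ⧸ I) × M),
      (l.map fun p => p.1 ⊗ₜ[R] p.2).sum = t ∧
      (l.map fun p => qR R I p.1 * ‖p.2‖).sum = c}

/-! Isolation of `R` at `0` passes to `R ⧸ I`: a class of quotient norm `< ε` has a lift of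
norm `< ε`, which is `0`. Hence every nonzero class has quotient norm `≥ ε > 0`, so it has a lift
of norm at most twice its quotient norm. Lifting the first factors of a representation
`∑ xᵢ ⊗ mᵢ` this way bounds `‖M ⧸ IM‖` by `2 ⋅ pn16`; conversely the class of `m` corresponds to
`1 ⊗ m`, which bounds `pn16` by `‖1‖ ⋅ ‖M ⧸ IM‖`. -/

open TensorProduct

section QuotientSeminorm

variable {S : Type*} [NormedCommRing S] {J : Ideal S}

lemma qR_nonneg (x : S ⧸ J) : 0 ≤ qR S J x :=
  Real.sInf_nonneg (by rintro c ⟨r, -, rfl⟩; exact norm_nonneg r)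

lemma qR_mk_le (r : S) : qR S J (Ideal.Quotient.mk J r) ≤ ‖r‖ :=
  csInf_le ⟨0, by rintro c ⟨s, -, rfl⟩; exact norm_nonneg s⟩ ⟨r, rfl, rfl⟩

lemma exists_mk_eq_norm_lt_of_qR_lt {x : S ⧸ J} {c : ℝ} (h : qR S J x < c) :
    ∃ r : S, Ideal.Quotient.mk J r = x ∧ ‖r‖ < c := by
  obtain ⟨r, hr⟩ := Ideal.Quotient.mk_surjective x
  obtain ⟨-, ⟨r, hr, rfl⟩, hlt⟩ := exists_lt_of_csInf_lt (by exact ⟨‖r‖, r, hr, rfl⟩) h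
  exact ⟨r, hr, hlt⟩

lemma eq_zero_of_qR_lt {ε : ℝ} (hS : ∀ r : S, ‖r‖ < ε → r = 0) {x : S ⧸ J}
    (hx : qR S J x < ε) : x = 0 := by
  obtain ⟨r, rfl, hr⟩ := exists_mk_eq_norm_lt_of_qR_lt hx
  rw [hS r hr, map_zero]

lemma exists_mk_eq_norm_le_two_mul_qR (hS : ∃ ε > (0 : ℝ), ∀ r : S, ‖r‖ < ε → r = 0)
    (x : S ⧸ J) : ∃ r : S, Ideal.Quotient.mk J r = x ∧ ‖r‖ ≤ 2 * qR S J x := by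
  obtain ⟨ε, hε, hS₀⟩ := hS
  by_cases hx : x = 0
  · exact ⟨0, by rw [hx, map_zero], by simpa using qR_nonneg x⟩
  · have hεx : ε ≤ qR S J x := le_of_not_gt fun h => hx (eq_zero_of_qR_lt hS₀ h)
    obtain ⟨r, hr, hlt⟩ := exists_mk_eq_norm_lt_of_qR_lt (c := 2 * qR S J x) (by linarith)
    exact ⟨r, hr, hlt.le⟩

variable {N : Type*} [NormedAddCommGroup N]

lemma sum_qR_mul_norm_nonneg (l : List ((S ⧸ J) × N)) :
    0 ≤ (l.map fun p => qR S J p.1 * ‖p.2‖).sum :=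
  List.sum_nonneg fun _ hx => by
    obtain ⟨p, -, rfl⟩ := List.mem_map.mp hx
    exact mul_nonneg (qR_nonneg p.1) (norm_nonneg p.2)

variable [Module S N]

lemma qM_mk_le (m : N) : qM S N J (Submodule.Quotient.mk m) ≤ ‖m‖ :=
  csInf_le ⟨0, by rintro c ⟨s, -, rfl⟩; exact norm_nonneg s⟩ ⟨m, rfl, rfl⟩

lemma qM_nonneg (y : N ⧸ (J • ⊤ : Submodule S N)) : 0 ≤ qM S N J y :=
  Real.sInf_nonneg (by rintro c ⟨m, -, rfl⟩; exact norm_nonneg m)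

lemma le_mul_qM {a c : ℝ} (ha : 0 ≤ a) {y : N ⧸ (J • ⊤ : Submodule S N)}
    (h : ∀ m : N, Submodule.Quotient.mk m = y → c ≤ a * ‖m‖) : c ≤ a * qM S N J y := by
  obtain ⟨m, hm⟩ := Submodule.Quotient.mk_surjective _ y
  rw [qM, ← smul_eq_mul, ← Real.sInf_smul_of_nonneg ha]
  refine le_csInf ⟨a • ‖m‖, Set.smul_mem_smul_set ⟨m, hm, rfl⟩⟩ ?_
  rintro _ ⟨_, ⟨m, hm, rfl⟩, rfl⟩
  exact h m hm

end QuotientSeminorm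

section ProjectiveSeminorm

variable {S N : Type*} [NormedCommRing S] [NormedAddCommGroup N] [Module S N] {J : Ideal S}

lemma pn16_le {t : (S ⧸ J) ⊗[S] N} {l : List ((S ⧸ J) × N)}
    (hl : (l.map fun p => p.1 ⊗ₜ[S] p.2).sum = t) :
    pn16 S N J t ≤ (l.map fun p => qR S J p.1 * ‖p.2‖).sum :=
  csInf_le ⟨0, by rintro _ ⟨l, -, rfl⟩; exact sum_qR_mul_norm_nonneg l⟩ ⟨l, hl, rfl⟩

lemma pn16_tmul_le (x : S ⧸ J) (m : N) : pn16 S N J (x ⊗ₜ[S] m) ≤ qR S J x * ‖m‖ := by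
  simpa using pn16_le (l := [(x, m)]) (by simp)

lemma le_pn16 {c : ℝ} {t : (S ⧸ J) ⊗[S] N}
    (h : ∀ l : List ((S ⧸ J) × N), (l.map fun p => p.1 ⊗ₜ[S] p.2).sum = t →
      c ≤ (l.map fun p => qR S J p.1 * ‖p.2‖).sum) :
    c ≤ pn16 S N J t := by
  obtain ⟨s, rfl⟩ := exists_multiset t
  have hs : (s.toList.map fun p => p.1 ⊗ₜ[S] p.2).sum = (s.map fun p => p.1 ⊗ₜ[S] p.2).sum := by
    rw [← Multiset.sum_coe, ← Multiset.map_coe, Multiset.coe_toList]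
  exact le_csInf ⟨_, s.toList, hs, rfl⟩ fun _ ⟨l, hl, hc⟩ => hc ▸ h l hl

lemma pn16_nonneg (t : (S ⧸ J) ⊗[S] N) : 0 ≤ pn16 S N J t :=
  le_pn16 fun l _ => sum_qR_mul_norm_nonneg l

lemma exists_mk_eq_quotTensorEquivQuotSMul_sum [IsBoundedSMul S N]
    (hS : ∃ ε > (0 : ℝ), ∀ r : S, ‖r‖ < ε → r = 0) (l : List ((S ⧸ J) × N)) :
    ∃ m : N, Submodule.Quotient.mk m =
        quotTensorEquivQuotSMul N J (l.map fun p => p.1 ⊗ₜ[S] p.2).sum ∧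
      ‖m‖ ≤ 2 * (l.map fun p => qR S J p.1 * ‖p.2‖).sum := by
  induction l with
  | nil => exact ⟨0, by simp, by simp⟩
  | cons p l ih =>
    obtain ⟨m, hm, hnm⟩ := ih
    obtain ⟨x, n⟩ := p
    obtain ⟨r, rfl, hr⟩ := exists_mk_eq_norm_le_two_mul_qR hS x
    refine ⟨r • n + m, ?_, ?_⟩
    · simp only [List.map_cons, List.sum_cons, map_add, ← hm,
        quotTensorEquivQuotSMul_mk_tmul, Submodule.Quotient.mk_add]
    · calc ‖r • n + m‖ ≤ ‖r‖ * ‖n‖ + ‖m‖ := (norm_add_le _ _).trans (by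
            gcongr; exact norm_smul_le r n)
        _ ≤ 2 * qR S J (Ideal.Quotient.mk J r) * ‖n‖ + ‖m‖ := by gcongr
        _ ≤ _ := by simp only [List.map_cons, List.sum_cons]; linarith

lemma qM_quotTensorEquivQuotSMul_le [IsBoundedSMul S N]
    (hS : ∃ ε > (0 : ℝ), ∀ r : S, ‖r‖ < ε → r = 0) (t : (S ⧸ J) ⊗[S] N) :
    qM S N J (quotTensorEquivQuotSMul N J t) ≤ 2 * pn16 S N J t := by
  rw [← div_le_iff₀' two_pos]
  refine le_pn16 fun l hl => (div_le_iff₀' two_pos).2 ?_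
  obtain ⟨m, hm, hnm⟩ := exists_mk_eq_quotTensorEquivQuotSMul_sum hS l
  rw [hl] at hm
  exact hm ▸ (qM_mk_le m).trans hnm

lemma pn16_le_qM_quotTensorEquivQuotSMul (t : (S ⧸ J) ⊗[S] N) :
    pn16 S N J t ≤ ‖(1 : S)‖ * qM S N J (quotTensorEquivQuotSMul N J t) := by
  refine le_mul_qM (norm_nonneg _) fun m hm => ?_
  have ht : t = 1 ⊗ₜ[S] m := by
    rw [← (quotTensorEquivQuotSMul N J).injective.eq_iff, quotTensorEquivQuotSMul_mk_one_tmul, hm]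
  calc pn16 S N J t ≤ qR S J 1 * ‖m‖ := ht ▸ pn16_tmul_le 1 m
    _ ≤ ‖(1 : S)‖ * ‖m‖ := by
      gcongr
      simpa using qR_mk_le (J := J) 1

end ProjectiveSeminorm

theorem stmt16
    (hR : ∃ ε > (0 : ℝ), ∀ r : R, ‖r‖ < ε → r = 0) :
    (∃ ε > (0 : ℝ), ∀ x : R ⧸ I, qR R I x < ε → x = 0) ∧
    ∃ φ : ((R ⧸ I) ⊗[R] M) →ₗ[R] (M ⧸ (I • ⊤ : Submodule R M)),
      (∀ (r : R) (m : M),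
        φ (Ideal.Quotient.mk I r ⊗ₜ[R] m) = Submodule.Quotient.mk (r • m)) ∧
      Function.Bijective φ ∧
      ∃ C > (0 : ℝ), ∀ t,
        qM R M I (φ t) ≤ C * pn16 R M I t ∧ pn16 R M I t ≤ C * qM R M I (φ t) := by
  refine ⟨hR.imp fun ε ⟨hε, hR₀⟩ => ⟨hε, fun _ => eq_zero_of_qR_lt hR₀⟩,
    quotTensorEquivQuotSMul M I, quotTensorEquivQuotSMul_mk_tmul I,
    (quotTensorEquivQuotSMul M I).bijective,
    max 2 ‖(1 : R)‖, by positivity, fun t => ⟨?_, ?_⟩⟩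
  · calc _ ≤ 2 * pn16 R M I t := qM_quotTensorEquivQuotSMul_le hR t
      _ ≤ _ := mul_le_mul_of_nonneg_right (le_max_left _ _) (pn16_nonneg t)
  · calc _ ≤ ‖(1 : R)‖ * qM R M I _ := pn16_le_qM_quotTensorEquivQuotSMul t
      _ ≤ _ := mul_le_mul_of_nonneg_right (le_max_right _ _) (qM_nonneg _)
end

section
/- Let X be a topological space. There exists a set ℱ of clopen subsets of X such that the characteristic functions {1_U : U ∈ ℱ} form a ℤ-linear basis of the ring Cfin(X, ℤ) of continuous (equivalently, locally constant) functions X → ℤ with finite image, where ℤ is given the discrete topology. -/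
variable (X : Type*) [TopologicalSpace X]

/-- The `ℤ`-module of continuous (equivalently, locally constant) functions `X → ℤ`
with finite image, where `ℤ` carries the discrete topology. -/
def CfinZ : Submodule ℤ (X → ℤ) where
  carrier := {f | Continuous f ∧ (Set.range f).Finite}
  add_mem' {a b} ha hb := ⟨ha.1.add hb.1,
    (Set.Finite.image2 (· + ·) ha.2 hb.2).subset (by
      rintro _ ⟨x, rfl⟩
      exact Set.mem_image2_of_mem (Set.mem_range_self x) (Set.mem_range_self x))⟩
  zero_mem' := ⟨continuous_const, Set.finite_range_const⟩
  smul_mem' c g hg := ⟨(continuous_const.mul hg.1 : Continuous fun x => c * g x),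
    (hg.2.image (c • ·)).subset (by
      rintro _ ⟨x, rfl⟩
      exact ⟨g x, Set.mem_range_self x, rfl⟩)⟩

open Profinite NobelingProof

set_option linter.unusedSectionVars false

section NobAux

variable (X : Type*) [TopologicalSpace X]
  [lo : LinearOrder {C : Set X // IsClopen C}]
  [wfl : @WellFoundedLT {C : Set X // IsClopen C} (@Preorder.toLT _ (@PartialOrder.toPreorder _ (@LinearOrder.toPartialOrder _ lo)))]

local notation "myI" => {C : Set X // IsClopen C}

variable {X} in
private noncomputable def myι (x : X) : myI → Bool := fun C => C.1.boolIndicator x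

private lemma continuous_myι : Continuous (myι (X := X)) :=
  continuous_pi fun C => (continuous_boolIndicator_iff_isClopen C.1).mpr C.2

private def myC : Set (myI → Bool) := closure (Set.range (myι (X := X)))

private lemma isClosed_myC : IsClosed (myC X) := isClosed_closure

variable {X} in
private noncomputable def myι' (x : X) : myC X := ⟨myι x, subset_closure ⟨x, rfl⟩⟩

private instance : CompactSpace (myC X) :=
  isCompact_iff_compactSpace.mp (isClosed_myC X).isCompact

/-- Pullback along `myι'` as a linear map. -/
private noncomputable def Φ : LocallyConstant (myC X) ℤ →ₗ[ℤ] (X → ℤ) where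
  toFun g := fun x => g (myι' x)
  map_add' g h := rfl
  map_smul' c g := rfl

private lemma Φ_inj : Function.Injective (Φ X) := by
  rw [← LinearMap.ker_eq_bot, eq_bot_iff]
  intro g hg
  have hg0 : ∀ x : X, g (myι' x) = 0 := fun x => congrFun (hg : Φ X g = 0) x
  have hcl : IsClosed {c : myC X | g c = 0} := by
    have := g.continuous
    exact IsClosed.preimage this (isClosed_discrete {0})
  have hsub : Set.range (myι' (X := X)) ⊆ {c : myC X | g c = 0} := by
    rintro _ ⟨x, rfl⟩; exact hg0 x
  have hdense : ∀ c : myC X, c ∈ closure (Set.range (myι' (X := X))) := by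
    intro c
    rw [closure_subtype]
    have : Subtype.val '' Set.range (myι' (X := X)) = Set.range (myι (X := X)) := by
      ext y; constructor
      · rintro ⟨c, ⟨x, rfl⟩, rfl⟩; exact ⟨x, rfl⟩
      · rintro ⟨x, rfl⟩; exact ⟨myι' x, ⟨x, rfl⟩, rfl⟩
    rw [this]
    exact c.2
  have : ∀ c : myC X, g c = 0 := fun c => hcl.closure_subset_iff.mpr hsub (hdense c)
  show g ∈ (⊥ : Submodule ℤ _)
  simp only [Submodule.mem_bot]
  ext c
  exact this c

private lemma Φ_e (i : myI) :
    Φ X (e (myC X) i) = Set.indicator (i.1 : Set X) (fun _ => (1 : ℤ)) := by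
  funext x
  show (if i.1.boolIndicator x = true then (1:ℤ) else 0) = _
  by_cases h : x ∈ i.1
  · rw [if_pos ((i.1.mem_iff_boolIndicator x).mp h), Set.indicator_of_mem h]
  · rw [if_neg (by simpa [myι', myι, Set.boolIndicator] using h), Set.indicator_of_notMem h]

private lemma Φ_range : LinearMap.range (Φ X) = CfinZ X := by
  apply le_antisymm
  · rintro _ ⟨g, rfl⟩
    refine ⟨(g.continuous).comp (Continuous.subtype_mk (continuous_myι X) _), ?_⟩
    exact g.range_finite.subset (Set.range_comp_subset_range (myι' (X := X)) g)
  · rintro f ⟨hfc, hff⟩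
    have key : f = ∑ n ∈ hff.toFinset, n • (Φ X) (e (myC X)
        ⟨f ⁻¹' {n}, (isClopen_discrete ({n} : Set ℤ)).preimage hfc⟩) := by
      funext x
      rw [Finset.sum_apply]
      rw [Finset.sum_eq_single_of_mem (f x) (hff.mem_toFinset.mpr ⟨x, rfl⟩)
        (fun n _ hn => by
          have : x ∉ f ⁻¹' {n} := by simp [hn.symm]
          simp [Φ_e, Set.indicator_of_notMem this])]
      simp [Φ_e, Set.indicator_of_mem (show x ∈ f ⁻¹' {f x} from rfl)]
    rw [key]
    exact Submodule.sum_mem _ fun n _ => Submodule.smul_mem _ _ ⟨_, rfl⟩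

variable {X} in
/-- The clopen set associated to a product. -/
private def T (l : {l : Products myI // l.isGood (myC X)}) : Set X :=
  {x | ∀ i ∈ l.1.1, x ∈ i.1}

private lemma isClopen_list (L : List myI) : IsClopen {x : X | ∀ i ∈ L, x ∈ i.1} := by
  induction L with
  | nil => simpa using isClopen_univ
  | cons a as ih =>
      have : {x : X | ∀ i ∈ a :: as, x ∈ i.1} = a.1 ∩ {x : X | ∀ i ∈ as, x ∈ i.1} := by
        ext x
        simp only [Set.mem_setOf_eq, List.mem_cons, Set.mem_inter_iff]
        constructor
        · intro h; exact ⟨h a (Or.inl rfl), fun i hi => h i (Or.inr hi)⟩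
        · rintro ⟨h1, h2⟩ i (rfl | hi)
          exacts [h1, h2 i hi]
      rw [this]
      exact a.2.inter ih

private lemma Φ_eval (l : {l : Products myI // l.isGood (myC X)}) :
    Set.indicator (T l) (fun _ => (1 : ℤ)) = Φ X (GoodProducts.eval (myC X) l) := by
  funext x
  show _ = (Products.eval (myC X) l.1) (myι' x)
  rw [Products.eval_eq]
  by_cases h : x ∈ T l
  · rw [Set.indicator_of_mem h, if_pos]
    intro i hi
    exact (Set.mem_iff_boolIndicator _ _).mp (h i hi)
  · rw [Set.indicator_of_notMem h, if_neg]
    intro hc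
    exact h (fun i hi => (Set.mem_iff_boolIndicator _ _).mpr (hc i hi))

private lemma T_inj : Function.Injective (T (X := X)) := by
  intro a b h
  apply GoodProducts.injective (myC X)
  apply Φ_inj X
  rw [← Φ_eval, ← Φ_eval, h]

theorem stmt17_aux :
    ∃ ℱ : Set (Set X), (∀ U ∈ ℱ, IsClopen U) ∧
      LinearIndependent ℤ (fun U : ℱ => Set.indicator (U : Set X) (fun _ => (1 : ℤ))) ∧
      Submodule.span ℤ (Set.range fun U : ℱ => Set.indicator (U : Set X) fun _ => (1 : ℤ))
        = CfinZ X := by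
  refine ⟨Set.range (T (X := X)), ?_, ?_, ?_⟩
  · rintro _ ⟨l, rfl⟩
    exact isClopen_list X l.1.1
  all_goals {
    have li : LinearIndependent ℤ ((Φ X) ∘ GoodProducts.eval (myC X)) :=
      (GoodProducts.linearIndependent (myC X) (isClosed_myC X)).map'
        (Φ X) (LinearMap.ker_eq_bot.mpr (Φ_inj X))
    have heq : (fun U : Set.range (T (X := X)) =>
        Set.indicator (U : Set X) (fun _ => (1 : ℤ)))
        = ((Φ X) ∘ GoodProducts.eval (myC X)) ∘ (Equiv.ofInjective _ (T_inj X)).symm := by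
      funext U
      have h1 : T ((Equiv.ofInjective _ (T_inj X)).symm U) = (U : Set X) :=
        Equiv.apply_ofInjective_symm (T_inj X) U
      show Set.indicator (U : Set X) _ = _
      rw [← h1, Φ_eval]
      rfl
    first
    | exact heq ▸ li.comp _ (Equiv.injective _)
    | ( rw [heq, Set.range_comp, Equiv.range_eq_univ, Set.image_univ, Set.range_comp,
          Submodule.span_image]
        rw [top_le_iff.mp (GoodProducts.span (myC X) (isClosed_myC X)), Submodule.map_top]
        exact Φ_range X )
  }

end NobAux

/-- Nöbeling's theorem: there is a family `ℱ` of clopen subsets of `X` whose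
characteristic functions form a `ℤ`-linear basis of `Cfin(X,ℤ)`. -/
theorem stmt17 :
    ∃ ℱ : Set (Set X), (∀ U ∈ ℱ, IsClopen U) ∧
      LinearIndependent ℤ (fun U : ℱ => Set.indicator (U : Set X) (fun _ => (1 : ℤ))) ∧
      Submodule.span ℤ (Set.range fun U : ℱ => Set.indicator (U : Set X) fun _ => (1 : ℤ))
        = CfinZ X := by
  obtain ⟨h1, h2⟩ := exists_wellOrder {C : Set X // IsClopen C}
  exact @stmt17_aux X _ h1 h2
end
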